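/- There is no set G of functions from ℝ⁴ to ℝ⁴ that forms a group under composition and satisfies Scal∘Triv ⊊ G ⊊ Scal∘Poi. -/

import Mathlib

/-!
Strip the scaling and translation from an element of `G` outside Scal∘Triv: this leaves a
Lorentz map `L ∈ G` that is not trivial. Every Lorentz map is `T₁ ∘ boost χ ∘ T₂` with `T₁, T₂`
linear trivial and `cosh χ = |(L e₀)₀|`, so `G` contains a boost of some rapidity `χ > 0`.
Sandwiching a spatial rotation between two copies of `boost χ` and factoring again yields all
boosts of rapidity in `[0, 2χ]`; rapidities add under composition, so every boost, hence every
Lorentz map, hence all of Scal∘Poi, lies in `G`.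
-/

/-- Spacetime points: elements of ℝ⁴. -/
abbrev Pt : Type := Fin 4 → ℝ

/-- Lightlike relatedness λ. -/
def lightlike (p q : Pt) : Prop :=
  (p 0 - q 0) ^ 2 = (p 1 - q 1) ^ 2 + (p 2 - q 2) ^ 2 + (p 3 - q 3) ^ 2

/-- Absolute simultaneity S. -/
def simul (p q : Pt) : Prop := p 0 = q 0

/-- Squared Minkowski length. -/
def sqMink (p : Pt) : ℝ := p 0 ^ 2 - p 1 ^ 2 - p 2 ^ 2 - p 3 ^ 2

/-- Squared Euclidean length. -/
def sqEucl (p : Pt) : ℝ := p 0 ^ 2 + p 1 ^ 2 + p 2 ^ 2 + p 3 ^ 2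

/-- Translations of ℝ⁴. -/
def IsTranslation (τ : Pt → Pt) : Prop := ∃ b : Pt, ∀ p, τ p = p + b

/-- Lorentz transformations: bijective linear maps preserving squared Minkowski length. -/
def IsLorentz (L : Pt → Pt) : Prop :=
  IsLinearMap ℝ L ∧ Function.Bijective L ∧ ∀ p, sqMink (L p) = sqMink p

/-- Poincaré transformations: translations composed with Lorentz transformations. -/
def IsPoincare (P : Pt → Pt) : Prop :=
  ∃ τ L, IsTranslation τ ∧ IsLorentz L ∧ P = τ ∘ L

/-- Euclidean isometries: translations composed with bijective linear maps preserving
squared Euclidean length. -/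
def IsEuclIsom (A : Pt → Pt) : Prop :=
  ∃ τ L, IsTranslation τ ∧ IsLinearMap ℝ L ∧ Function.Bijective L ∧
    (∀ p, sqEucl (L p) = sqEucl p) ∧ A = τ ∘ L

/-- Vertical lines: lines parallel to the time axis. -/
def IsVerticalLine (ℓ : Set Pt) : Prop :=
  ∃ q : Pt, ℓ = {p | p 1 = q 1 ∧ p 2 = q 2 ∧ p 3 = q 3}

/-- Trivial transformations: Euclidean isometries taking vertical lines to vertical lines. -/
def IsTrivial (A : Pt → Pt) : Prop :=
  IsEuclIsom A ∧ ∀ ℓ, IsVerticalLine ℓ → IsVerticalLine (A '' ℓ)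

/-- Scalings: maps `p ↦ a • p` with `a ≠ 0`. -/
def IsScaling (D : Pt → Pt) : Prop := ∃ a : ℝ, a ≠ 0 ∧ ∀ p, D p = a • p

/-- The point (1,0,0,0). -/
def unitTime : Pt := fun i => if i = 0 then 1 else 0

/-- Orthochronous maps: maps not changing the direction of time. -/
def Orthochronous (A : Pt → Pt) : Prop := A unitTime 0 > A 0 0

/-- The set of Poincaré transformations. -/
def Poi : Set (Pt → Pt) := {P | IsPoincare P}

/-- The set of orthochronous Poincaré transformations. -/
def PoiUp : Set (Pt → Pt) := {P | IsPoincare P ∧ Orthochronous P}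

/-- The set of trivial transformations. -/
def Triv : Set (Pt → Pt) := {T | IsTrivial T}

/-- The set of orthochronous trivial transformations. -/
def TrivUp : Set (Pt → Pt) := {T | IsTrivial T ∧ Orthochronous T}

/-- The set of scalings. -/
def Scal : Set (Pt → Pt) := {D | IsScaling D}

/-- Composition of two sets of functions: `H ∘ G = {h ∘ g : h ∈ H, g ∈ G}`. -/
def setComp (H G : Set (Pt → Pt)) : Set (Pt → Pt) := {f | ∃ h ∈ H, ∃ g ∈ G, f = h ∘ g}

/-- A set of functions forms a group under composition. -/
def IsCompGroup (G : Set (Pt → Pt)) : Prop :=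
  id ∈ G ∧ (∀ f ∈ G, ∀ g ∈ G, f ∘ g ∈ G) ∧
    ∀ f ∈ G, ∃ g ∈ G, f ∘ g = id ∧ g ∘ f = id

open Real Set Function

lemma sqMink_eq_two_mul_sq_sub_sqEucl (p : Pt) : sqMink p = 2 * p 0 ^ 2 - sqEucl p := by
  simp only [sqMink, sqEucl]
  ring

lemma sqEucl_eq_dotProduct (p : Pt) : sqEucl p = p ⬝ᵥ p := by
  simp [sqEucl, dotProduct, Fin.sum_univ_four, sq]

lemma IsLorentz.comp {L₁ L₂ : Pt → Pt} (h₁ : IsLorentz L₁) (h₂ : IsLorentz L₂) :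
    IsLorentz (L₁ ∘ L₂) :=
  ⟨((h₁.1.mk' L₁).comp (h₂.1.mk' L₂)).isLinear, h₁.2.1.comp h₂.2.1,
    fun p => (h₁.2.2 _).trans (h₂.2.2 p)⟩

lemma IsLorentz.sqMink_apply_unitTime {M : Pt → Pt} (hM : IsLorentz M) :
    sqMink (M unitTime) = 1 := by
  rw [hM.2.2]
  simp [sqMink, unitTime]

lemma one_le_abs_of_sqMink_eq_one {u : Pt} (hu : sqMink u = 1) : 1 ≤ |u 0| := by
  simp only [sqMink] at hu
  nlinarith [sq_abs (u 0), abs_nonneg (u 0), sq_nonneg (u 1), sq_nonneg (u 2), sq_nonneg (u 3)]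

/-- These are exactly the linear trivial transformations. -/
def IsTrivialLinear (L : Pt → Pt) : Prop :=
  IsLorentz L ∧ ∀ p, sqEucl (L p) = sqEucl p

namespace IsTrivialLinear

variable {L L₁ L₂ : Pt → Pt}

lemma of_sqEucl (hlin : IsLinearMap ℝ L) (hE : ∀ p, sqEucl (L p) = sqEucl p)
    (ht : ∀ p, L p 0 ^ 2 = p 0 ^ 2) : IsTrivialLinear L := by
  have hinj : Injective (hlin.mk' L) := by
    rw [← LinearMap.ker_eq_bot, LinearMap.ker_eq_bot']
    intro p hp
    have h := hE p
    rw [show L p = 0 from hp, sqEucl_eq_dotProduct, sqEucl_eq_dotProduct, zero_dotProduct] at h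
    exact dotProduct_self_eq_zero.1 h.symm
  refine ⟨⟨hlin, ⟨hinj, LinearMap.injective_iff_surjective.1 hinj⟩, fun p => ?_⟩, hE⟩
  rw [sqMink_eq_two_mul_sq_sub_sqEucl, sqMink_eq_two_mul_sq_sub_sqEucl, hE, ht]

lemma sq_apply_zero (h : IsTrivialLinear L) (p : Pt) : L p 0 ^ 2 = p 0 ^ 2 := by
  have h₁ := h.1.2.2 p
  rw [sqMink_eq_two_mul_sq_sub_sqEucl, sqMink_eq_two_mul_sq_sub_sqEucl, h.2] at h₁
  linarith

protected lemma id : IsTrivialLinear id :=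
  ⟨⟨LinearMap.id.isLinear, bijective_id, fun _ => rfl⟩, fun _ => rfl⟩

protected lemma comp (h₁ : IsTrivialLinear L₁) (h₂ : IsTrivialLinear L₂) :
    IsTrivialLinear (L₁ ∘ L₂) :=
  ⟨h₁.1.comp h₂.1, fun p => (h₁.2 _).trans (h₂.2 p)⟩

lemma exists_inverse (h : IsTrivialLinear L) :
    ∃ L', IsTrivialLinear L' ∧ L ∘ L' = id ∧ L' ∘ L = id := by
  let e : Pt ≃ₗ[ℝ] Pt := LinearEquiv.ofBijective (h.1.1.mk' L) h.1.2.1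
  have hsymm : ∀ Q : Pt → ℝ, (∀ p, Q (L p) = Q p) → ∀ p, Q (e.symm p) = Q p := fun Q hQ p =>
    (hQ (e.symm p)).symm.trans (congrArg Q (e.apply_symm_apply p))
  exact ⟨e.symm, ⟨⟨e.symm.toLinearMap.isLinear, e.symm.bijective, hsymm _ h.1.2.2⟩,
    hsymm _ h.2⟩, funext e.apply_symm_apply, funext e.symm_apply_apply⟩

end IsTrivialLinear

lemma IsLorentz.isTrivialLinear_of_map_unitTime {N : Pt → Pt} (hN : IsLorentz N)
    (h₀ : N unitTime = unitTime) : IsTrivialLinear N := by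
  have hshift : ∀ x : Pt, sqMink (x + unitTime) = sqMink x + 2 * x 0 + 1 := by
    intro x
    simp only [sqMink, Pi.add_apply, unitTime, Fin.isValue, Fin.reduceEq, ↓reduceIte, add_zero]
    ring
  have ht : ∀ p, N p 0 = p 0 := fun p => by
    have h := hN.2.2 (p + unitTime)
    rw [hN.1.map_add, h₀, hshift, hshift, hN.2.2 p] at h
    linarith
  refine ⟨hN, fun p => ?_⟩
  have h := hN.2.2 p
  rw [sqMink_eq_two_mul_sq_sub_sqEucl, sqMink_eq_two_mul_sq_sub_sqEucl, ht] at h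
  linarith

lemma isVerticalLine_iff {ℓ : Set Pt} :
    IsVerticalLine ℓ ↔ ∃ q, ℓ = range fun t : ℝ => q + t • unitTime := by
  have hline : ∀ q : Pt, {p : Pt | p 1 = q 1 ∧ p 2 = q 2 ∧ p 3 = q 3} =
      range fun t : ℝ => q + t • unitTime := by
    intro q
    ext p
    constructor
    · rintro ⟨h₁, h₂, h₃⟩
      refine ⟨p 0 - q 0, funext fun i => ?_⟩
      fin_cases i <;> simp [unitTime, h₁, h₂, h₃]
    · rintro ⟨t, rfl⟩
      simp [unitTime]
  simp only [IsVerticalLine, hline]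

lemma IsTrivialLinear.exists_map_unitTime {L : Pt → Pt} (h : IsTrivialLinear L) :
    ∃ c : ℝ, c ≠ 0 ∧ L unitTime = c • unitTime := by
  have h₁ : sqEucl (L unitTime) = 1 := by
    rw [h.2]
    simp [sqEucl, unitTime]
  have h₀ : L unitTime 0 ^ 2 = 1 := by
    rw [h.sq_apply_zero]
    simp [unitTime]
  simp only [sqEucl] at h₁
  refine ⟨L unitTime 0, fun hc => by simp [hc] at h₀, funext fun i => ?_⟩
  fin_cases i <;> simp [unitTime] <;>
    nlinarith [sq_nonneg (L unitTime 1), sq_nonneg (L unitTime 2), sq_nonneg (L unitTime 3)]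

lemma IsTrivialLinear.isTrivial {L : Pt → Pt} (h : IsTrivialLinear L) : IsTrivial L := by
  refine ⟨⟨id, L, ⟨0, fun p => (add_zero p).symm⟩, h.1.1, h.1.2.1, h.2, rfl⟩, ?_⟩
  simp only [isVerticalLine_iff]
  rintro _ ⟨q, rfl⟩
  obtain ⟨c, hc, hu⟩ := h.exists_map_unitTime
  refine ⟨L q, ?_⟩
  rw [← range_comp, ← (mul_left_surjective₀ hc).range_comp fun t : ℝ => L q + t • unitTime]
  congr 1
  funext t
  simp only [comp_apply, h.1.1.map_add, h.1.1.map_smul, hu, smul_smul, mul_comm]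

lemma isTrivial_add_const (b : Pt) : IsTrivial (· + b) := by
  refine ⟨⟨(· + b), id, ⟨b, fun _ => rfl⟩, LinearMap.id.isLinear, bijective_id, fun _ => rfl,
    rfl⟩, ?_⟩
  simp only [isVerticalLine_iff]
  rintro _ ⟨q, rfl⟩
  refine ⟨q + b, ?_⟩
  rw [← range_comp]
  congr 1
  funext t
  simp only [comp_apply, add_right_comm]

lemma IsEuclIsom.comp {A B : Pt → Pt} (hA : IsEuclIsom A) (hB : IsEuclIsom B) :
    IsEuclIsom (A ∘ B) := by
  obtain ⟨τ₁, L₁, ⟨b₁, hb₁⟩, l₁, bij₁, e₁, rfl⟩ := hA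
  obtain ⟨τ₂, L₂, ⟨b₂, hb₂⟩, l₂, bij₂, e₂, rfl⟩ := hB
  refine ⟨(· + (L₁ b₂ + b₁)), L₁ ∘ L₂, ⟨_, fun _ => rfl⟩,
    ((l₁.mk' L₁).comp (l₂.mk' L₂)).isLinear, bij₁.comp bij₂, fun p => (e₁ _).trans (e₂ p),
    funext fun p => ?_⟩
  simp only [comp_apply, hb₁, hb₂, l₁.map_add]
  abel

lemma IsTrivial.comp {A B : Pt → Pt} (hA : IsTrivial A) (hB : IsTrivial B) :
    IsTrivial (A ∘ B) :=
  ⟨hA.1.comp hB.1, fun ℓ hℓ => by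
    rw [image_comp]
    exact hA.2 _ (hB.2 _ hℓ)⟩

noncomputable def boost (χ : ℝ) (p : Pt) : Pt :=
  ![p 0 * cosh χ + p 1 * sinh χ, p 0 * sinh χ + p 1 * cosh χ, p 2, p 3]

lemma boost_comp_boost (a b : ℝ) : boost a ∘ boost b = boost (a + b) := by
  funext p i
  fin_cases i <;> simp [boost, cosh_add, sinh_add] <;> ring

lemma boost_zero : boost 0 = id := by
  funext p i
  fin_cases i <;> simp [boost]

lemma boost_comp_boost_neg (χ : ℝ) : boost χ ∘ boost (-χ) = id := by
  rw [boost_comp_boost, add_neg_cancel, boost_zero]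

lemma boost_unitTime (χ : ℝ) : boost χ unitTime = ![cosh χ, sinh χ, 0, 0] := by
  funext i
  fin_cases i <;> simp [boost, unitTime]

lemma isLorentz_boost (χ : ℝ) : IsLorentz (boost χ) := by
  refine ⟨⟨fun p q => ?_, fun c p => ?_⟩, ?_, fun p => ?_⟩
  · funext i
    fin_cases i <;> simp [boost] <;> ring
  · funext i
    fin_cases i <;> simp [boost] <;> ring
  · refine bijective_iff_has_inverse.2 ⟨boost (-χ), fun p => ?_, congrFun (boost_comp_boost_neg χ)⟩
    simpa using congrFun (boost_comp_boost_neg (-χ)) p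
  · simp only [sqMink, boost, Fin.isValue, Matrix.cons_val_zero, Matrix.cons_val_one,
      Matrix.cons_val, sub_left_inj]
    linear_combination (p 0 ^ 2 - p 1 ^ 2) * cosh_sq_sub_sinh_sq χ

noncomputable def spatialRotation (θ : ℝ) (p : Pt) : Pt :=
  ![p 0, p 1 * cos θ - p 2 * sin θ, p 1 * sin θ + p 2 * cos θ, p 3]

lemma isTrivialLinear_spatialRotation (θ : ℝ) : IsTrivialLinear (spatialRotation θ) := by
  refine .of_sqEucl ⟨fun p q => ?_, fun c p => ?_⟩ (fun p => ?_) fun p => by simp [spatialRotation]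
  · funext i
    fin_cases i <;> simp [spatialRotation] <;> ring
  · funext i
    fin_cases i <;> simp [spatialRotation] <;> ring
  · simp only [sqEucl, spatialRotation, Fin.isValue, Matrix.cons_val_zero, Matrix.cons_val_one,
      Matrix.cons_val, add_left_inj]
    linear_combination (p 1 ^ 2 + p 2 ^ 2) * sin_sq_add_cos_sq θ

def timeReflection (p : Pt) : Pt := ![-p 0, p 1, p 2, p 3]

lemma isTrivialLinear_timeReflection : IsTrivialLinear timeReflection := by
  refine .of_sqEucl ⟨fun p q => ?_, fun c p => ?_⟩ (fun p => ?_) fun p => by simp [timeReflection]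
  · funext i
    fin_cases i <;> simp [timeReflection, add_comm]
  · funext i
    fin_cases i <;> simp [timeReflection]
  · simp [sqEucl, timeReflection]

/-- Reflection in the hyperplane orthogonal to `w`; for `w = 0` the junk value `2 / 0 = 0`
makes it the identity. -/
noncomputable def householder (w p : Pt) : Pt := p - (2 / (w ⬝ᵥ w) * (p ⬝ᵥ w)) • w

lemma isTrivialLinear_householder {w : Pt} (hw : w 0 = 0) : IsTrivialLinear (householder w) := by
  have hc : 2 / (w ⬝ᵥ w) * (2 / (w ⬝ᵥ w) * (w ⬝ᵥ w) - 2) = 0 := by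
    rcases eq_or_ne (w ⬝ᵥ w) 0 with h | h
    · simp [h]
    · rw [div_mul_cancel₀ _ h, sub_self, mul_zero]
  refine .of_sqEucl ⟨fun p q => ?_, fun a p => ?_⟩ (fun p => ?_) fun p => by simp [householder, hw]
  · simp only [householder, add_dotProduct, mul_add, add_smul]
    abel
  · simp only [householder, smul_dotProduct, smul_eq_mul, smul_sub, smul_smul]
    ring_nf
  · simp only [sqEucl_eq_dotProduct, householder, sub_dotProduct, dotProduct_sub, smul_dotProduct,
      dotProduct_smul, dotProduct_comm w p, smul_eq_mul]
    linear_combination (p ⬝ᵥ w) ^ 2 * hc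

lemma householder_apply_eq_sub {w u : Pt} (h : w ⬝ᵥ w = 2 * (u ⬝ᵥ w)) :
    householder w u = u - w := by
  rcases eq_or_ne (w ⬝ᵥ w) 0 with h₀ | h₀
  · simp [householder, dotProduct_self_eq_zero.1 h₀]
  · have : 2 / (w ⬝ᵥ w) * (u ⬝ᵥ w) = 1 := by
      field_simp
      linarith
    simp [householder, this]

lemma exists_isTrivialLinear_apply_eq_boost_unitTime_of_nonneg {u : Pt} (hu : sqMink u = 1)
    (hu₀ : 0 ≤ u 0) : ∃ E, IsTrivialLinear E ∧ E u = boost (arcosh (u 0)) unitTime := by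
  have h₁ : 1 ≤ u 0 := abs_of_nonneg hu₀ ▸ one_le_abs_of_sqMink_eq_one hu
  have hr : sinh (arcosh (u 0)) ^ 2 = u 1 ^ 2 + u 2 ^ 2 + u 3 ^ 2 := by
    simp only [sqMink] at hu
    rw [sinh_arcosh h₁, sq_sqrt (by nlinarith)]
    linarith
  -- `householder w` swaps the spatial part of `u` with `(r, 0, 0)`, where `r` is its length.
  let w : Pt := ![0, u 1 - sinh (arcosh (u 0)), u 2, u 3]
  refine ⟨householder w, isTrivialLinear_householder rfl, ?_⟩
  rw [householder_apply_eq_sub, boost_unitTime, cosh_arcosh h₁]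
  · funext i
    fin_cases i <;> simp [w]
  · simp only [w, dotProduct, Fin.sum_univ_four, Fin.isValue, Matrix.cons_val_zero,
      Matrix.cons_val_one, Matrix.cons_val, mul_zero, zero_add]
    linear_combination hr

lemma exists_isTrivialLinear_apply_eq_boost_unitTime {u : Pt} (hu : sqMink u = 1) :
    ∃ E, IsTrivialLinear E ∧ E u = boost (arcosh |u 0|) unitTime := by
  obtain ⟨S, hS, hSu⟩ : ∃ S, IsTrivialLinear S ∧ S u 0 = |u 0| := by
    rcases le_or_gt 0 (u 0) with h | h
    · exact ⟨id, .id, (abs_of_nonneg h).symm⟩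
    · exact ⟨timeReflection, isTrivialLinear_timeReflection, by simp [timeReflection, abs_of_neg h]⟩
  obtain ⟨E, hE, hEu⟩ := exists_isTrivialLinear_apply_eq_boost_unitTime_of_nonneg
    (u := S u) (by rw [hS.1.2.2, hu]) (hSu ▸ abs_nonneg _)
  exact ⟨E ∘ S, hE.comp hS, by rw [comp_apply, hEu, hSu]⟩

lemma IsLorentz.exists_eq_comp_boost_comp {M : Pt → Pt} (hM : IsLorentz M) :
    ∃ T₁ T₂, IsTrivialLinear T₁ ∧ IsTrivialLinear T₂ ∧
      M = T₁ ∘ boost (arcosh |M unitTime 0|) ∘ T₂ := by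
  -- `E` moves `M e₀` onto `boost χ e₀`, so `boost (-χ) ∘ E ∘ M` fixes `e₀` and is trivial.
  obtain ⟨E, hE, hEu⟩ := exists_isTrivialLinear_apply_eq_boost_unitTime hM.sqMink_apply_unitTime
  set χ := arcosh |M unitTime 0|
  obtain ⟨E', hE', -, hE'E⟩ := hE.exists_inverse
  have hN : IsTrivialLinear (boost (-χ) ∘ E ∘ M) := by
    refine ((isLorentz_boost _).comp (hE.1.comp hM)).isTrivialLinear_of_map_unitTime ?_
    simpa [hEu] using congrFun (boost_comp_boost_neg (-χ)) unitTime
  refine ⟨E', _, hE', hN, ?_⟩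
  calc M = E' ∘ (boost χ ∘ boost (-χ)) ∘ E ∘ M := by
        rw [boost_comp_boost_neg, id_comp, ← comp_assoc, hE'E, id_comp]
    _ = _ := rfl

lemma boost_spatialRotation_boost_unitTime (χ θ : ℝ) :
    (boost χ ∘ spatialRotation θ ∘ boost χ) unitTime 0 = cosh χ ^ 2 + sinh χ ^ 2 * cos θ := by
  simp only [comp_apply, boost, spatialRotation, unitTime, Fin.isValue, Fin.reduceEq, ↓reduceIte,
    Matrix.cons_val_zero, Matrix.cons_val_one, Matrix.cons_val, one_mul, zero_mul, add_zero,
    sub_zero]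
  ring

structure ExtendsTriv (G : Set (Pt → Pt)) : Prop where
  comp_mem : ∀ f ∈ G, ∀ g ∈ G, f ∘ g ∈ G
  triv_subset : Triv ⊆ G

namespace ExtendsTriv

variable {G : Set (Pt → Pt)}

lemma comp_comp_mem_iff (hG : ExtendsTriv G) {T₁ T₂ : Pt → Pt} (h₁ : IsTrivialLinear T₁)
    (h₂ : IsTrivialLinear T₂) {f : Pt → Pt} : T₁ ∘ f ∘ T₂ ∈ G ↔ f ∈ G := by
  have hmem : ∀ {T}, IsTrivialLinear T → T ∈ G := fun hT => hG.triv_subset hT.isTrivial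
  refine ⟨fun hf => ?_, fun hf => hG.comp_mem _ (hmem h₁) _ (hG.comp_mem _ hf _ (hmem h₂))⟩
  obtain ⟨S₁, hS₁, -, hS₁T₁⟩ := h₁.exists_inverse
  obtain ⟨S₂, hS₂, hT₂S₂, -⟩ := h₂.exists_inverse
  have hf' : f = S₁ ∘ (T₁ ∘ f ∘ T₂) ∘ S₂ := by
    simp only [← comp_assoc, hS₁T₁, id_comp]
    rw [comp_assoc, hT₂S₂, comp_id]
  rw [hf']
  exact hG.comp_mem _ (hmem hS₁) _ (hG.comp_mem _ hf _ (hmem hS₂))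

lemma boost_mem_of_mem (hG : ExtendsTriv G) {M : Pt → Pt} (hM : IsLorentz M) (hMG : M ∈ G) :
    boost (arcosh |M unitTime 0|) ∈ G := by
  obtain ⟨T₁, T₂, h₁, h₂, hM_eq⟩ := hM.exists_eq_comp_boost_comp
  exact (hG.comp_comp_mem_iff h₁ h₂).1 (hM_eq ▸ hMG)

lemma mem_of_boost_mem (hG : ExtendsTriv G) (hB : ∀ μ, 0 ≤ μ → boost μ ∈ G) {M : Pt → Pt}
    (hM : IsLorentz M) : M ∈ G := by
  obtain ⟨T₁, T₂, h₁, h₂, hM_eq⟩ := hM.exists_eq_comp_boost_comp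
  rw [hM_eq]
  exact (hG.comp_comp_mem_iff h₁ h₂).2
    (hB _ (arcosh_nonneg (one_le_abs_of_sqMink_eq_one hM.sqMink_apply_unitTime)))

lemma boost_nsmul_mem (hG : ExtendsTriv G) {χ : ℝ} (hB : boost χ ∈ G) (n : ℕ) :
    boost (n • χ) ∈ G := by
  induction n with
  | zero => simpa [boost_zero] using hG.triv_subset IsTrivialLinear.id.isTrivial
  | succ n ih =>
    rw [succ_nsmul, ← boost_comp_boost]
    exact hG.comp_mem _ ih _ hB

/-- As `θ` runs over `[0, π]`, the time dilation `cosh² χ + sinh² χ cos θ` of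
`boost χ ∘ spatialRotation θ ∘ boost χ` sweeps out `[1, cosh (2χ)]`. -/
lemma boost_mem_of_le_two_mul (hG : ExtendsTriv G) {χ δ : ℝ} (hχ : 0 < χ) (hB : boost χ ∈ G)
    (hδ₀ : 0 ≤ δ) (hδ : δ ≤ 2 * χ) : boost δ ∈ G := by
  have hs : 0 < sinh χ ^ 2 := pow_pos (sinh_pos_iff.2 hχ) 2
  have hle : cosh δ ≤ cosh χ ^ 2 + sinh χ ^ 2 := by
    rw [← cosh_two_mul, cosh_le_cosh, abs_of_nonneg hδ₀, abs_of_nonneg (by linarith)]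
    exact hδ
  set x := (cosh δ - cosh χ ^ 2) / sinh χ ^ 2
  have hx₁ : -1 ≤ x := by
    rw [le_div_iff₀ hs]
    nlinarith [one_le_cosh δ, cosh_sq_sub_sinh_sq χ]
  have hx₂ : x ≤ 1 := by
    rw [div_le_iff₀ hs]
    linarith
  have hM := (isLorentz_boost χ).comp ((isTrivialLinear_spatialRotation (arccos x)).1.comp
    (isLorentz_boost χ))
  have hMG : boost χ ∘ spatialRotation (arccos x) ∘ boost χ ∈ G :=
    hG.comp_mem _ hB _ (hG.comp_mem _
      (hG.triv_subset (isTrivialLinear_spatialRotation _).isTrivial) _ hB)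
  have hM₀ : (boost χ ∘ spatialRotation (arccos x) ∘ boost χ) unitTime 0 = cosh δ := by
    rw [boost_spatialRotation_boost_unitTime, cos_arccos hx₁ hx₂, mul_div_cancel₀ _ hs.ne']
    ring
  simpa [hM₀, abs_of_pos (cosh_pos δ), arcosh_cosh hδ₀] using hG.boost_mem_of_mem hM hMG

lemma boost_mem_of_nonneg (hG : ExtendsTriv G) {χ μ : ℝ} (hχ : 0 < χ) (hB : boost χ ∈ G)
    (hμ : 0 ≤ μ) : boost μ ∈ G := by
  obtain ⟨n, hn⟩ := exists_lt_nsmul hχ μ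
  exact hG.boost_mem_of_le_two_mul (hμ.trans_lt hn) (hG.boost_nsmul_mem hB n) hμ (by linarith)

lemma exists_pos_boost_mem (hG : ExtendsTriv G) {L : Pt → Pt} (hL : IsLorentz L) (hLG : L ∈ G)
    (hLT : ¬ IsTrivial L) : ∃ χ > 0, boost χ ∈ G := by
  refine ⟨_, (arcosh_nonneg (one_le_abs_of_sqMink_eq_one hL.sqMink_apply_unitTime)).lt_of_ne
    fun h₀ => hLT ?_, hG.boost_mem_of_mem hL hLG⟩
  obtain ⟨T₁, T₂, h₁, h₂, hL_eq⟩ := hL.exists_eq_comp_boost_comp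
  rw [hL_eq, ← h₀, boost_zero, id_comp]
  exact (h₁.comp h₂).isTrivial

lemma exists_lorentz_mem_not_isTrivial (hG : ExtendsTriv G) (hScal : Scal ⊆ G) {f : Pt → Pt}
    (hfG : f ∈ G) (hf : f ∈ setComp Scal Poi) (hfT : f ∉ setComp Scal Triv) :
    ∃ L, IsLorentz L ∧ L ∈ G ∧ ¬ IsTrivial L := by
  obtain ⟨D, ⟨a, ha, hD⟩, _, ⟨τ, L, ⟨b, hb⟩, hL, rfl⟩, rfl⟩ := hf
  obtain rfl : τ = (· + b) := funext hb
  refine ⟨L, hL, ?_, fun hLT => hfT ⟨D, ⟨a, ha, hD⟩, _, (isTrivial_add_const b).comp hLT, rfl⟩⟩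
  have hL_eq : L = (· + -b) ∘ (a⁻¹ • ·) ∘ D ∘ (· + b) ∘ L := by
    funext p
    simp [hD, smul_smul, ha]
  rw [hL_eq]
  exact hG.comp_mem _ (hG.triv_subset (isTrivial_add_const _)) _
    (hG.comp_mem _ (hScal ⟨a⁻¹, inv_ne_zero ha, fun _ => rfl⟩) _ hfG)

lemma setComp_Scal_Poi_subset (hG : ExtendsTriv G) (hScal : Scal ⊆ G)
    (hB : ∀ μ, 0 ≤ μ → boost μ ∈ G) : setComp Scal Poi ⊆ G := by
  rintro _ ⟨D, hD, _, ⟨τ, M, ⟨b, hb⟩, hM, rfl⟩, rfl⟩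
  obtain rfl : τ = (· + b) := funext hb
  exact hG.comp_mem _ (hScal hD) _
    (hG.comp_mem _ (hG.triv_subset (isTrivial_add_const b)) _ (hG.mem_of_boost_mem hB hM))

end ExtendsTriv

/-- There is no group (under composition) of functions from ℝ⁴ to ℝ⁴ lying strictly
between Scal∘Triv and Scal∘Poi. -/
theorem no_group_between_scalTriv_scalPoi :
    ¬ ∃ G : Set (Pt → Pt), IsCompGroup G ∧ setComp Scal Triv ⊂ G ∧ G ⊂ setComp Scal Poi := by
  rintro ⟨G, ⟨-, hcomp, -⟩, hlow, hup⟩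
  have hScal : Scal ⊆ G := fun D hD =>
    hlow.subset ⟨D, hD, id, IsTrivialLinear.id.isTrivial, rfl⟩
  have hG : ExtendsTriv G := ⟨hcomp, fun T hT =>
    hlow.subset ⟨id, ⟨1, one_ne_zero, fun p => (one_smul ℝ p).symm⟩, T, hT, rfl⟩⟩
  obtain ⟨f, hfG, hfT⟩ := exists_of_ssubset hlow
  obtain ⟨L, hL, hLG, hLT⟩ :=
    hG.exists_lorentz_mem_not_isTrivial hScal hfG (hup.subset hfG) hfT
  obtain ⟨χ, hχ, hBχ⟩ := hG.exists_pos_boost_mem hL hLG hLT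
  exact hup.not_superset
    (hG.setComp_Scal_Poi_subset hScal fun μ hμ => hG.boost_mem_of_nonneg hχ hBχ hμ)
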